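/- arXiv:1511.05479 — 2 statements merged into one kernel-verified Lean document; each statement's English description precedes it below -/
import Mathlib

section
/- Let P be an ε_k-noisy sample of a compact set K in a metric space X, and let Q be the output of the Declutter algorithm on (P,k). Then for every q ∈ Q there exists x ∈ K with d(q,x) ≤ 7ε_k. -/
/-!
Let `q` be a kept point, `r = d_{P,k}(q)` and `x ∈ K` nearest to `q`, so `d(q, x) ≤ r + ε`;
if `r ≤ 2ε` we are done. Otherwise the sample point `p` nearest to `x` has `d(x, p) ≤ ε` and,
`d_{P,k}` being 1-Lipschitz, `d_{P,k}(p) ≤ 2ε < r`, so `p` is processed before `q`. Hence some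
point `q'` kept before `q` lies within `2 d_{P,k}(p) ≤ 4ε` of `p`, while `q` was kept only if
`d(q, q') ≥ 2r`. The triangle inequality gives `2r ≤ r + 6ε`, hence `d(q, x) ≤ 7ε`.
-/

open Metric

/-- Core loop of the Declutter algorithm: scan the (pre-sorted) list, keeping a point `p`
iff no previously kept point lies in the open ball `B(p, 2 f p)` (w.r.t. distance `d`). -/
noncomputable def declutterAux {X : Type*} (d : X → X → ℝ) (f : X → ℝ) :
    List X → List X → List X
  | Q, [] => Q
  | Q, p :: rest =>
    if ∀ q ∈ Q, 2 * f p ≤ d p q then declutterAux d f (Q ++ [p]) rest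
    else declutterAux d f Q rest

noncomputable def declutter {X : Type*} (d : X → X → ℝ) (f : X → ℝ) (L : List X) : List X :=
  declutterAux d f [] L

/-- `Q` is a possible output of the Declutter algorithm on `P`, with robust distance
function `f`: the points of `P` are processed in nondecreasing order of `f`
(ties broken arbitrarily). -/
def IsDeclutterOutput {X : Type*} (d : X → X → ℝ) (f : X → ℝ) (P : Finset X)
    (Q : List X) : Prop :=
  ∃ L : List X, L.Perm P.toList ∧ L.Pairwise (fun a b => f a ≤ f b) ∧ Q = declutter d f L

variable {X : Type*} [MetricSpace X]

/-- Sorted (nondecreasing) list of distances from `x` to the points of `P`. -/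
noncomputable def sortedDists (P : Finset X) (x : X) : List ℝ :=
  (P.val.map (dist x)).sort (· ≤ ·)

/-- The k-distance: root mean square of the distances to the k nearest neighbors in `P`. -/
noncomputable def kdist (P : Finset X) (k : ℕ) (x : X) : ℝ :=
  Real.sqrt ((1 / (k : ℝ)) * (((sortedDists P x).take k).map (fun r => r ^ 2)).sum)

/-- `P` is an ε_k-noisy sample of `K`:
(1) the k-distance is at most ε on `K`; (2) every point of the space is within
`kdist + ε` of `K`. -/
def NoisySample (P : Finset X) (k : ℕ) (K : Set X) (ε : ℝ) : Prop :=
  (∀ x ∈ K, kdist P k x ≤ ε) ∧ ∀ x : X, infDist x K ≤ kdist P k x + ε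

theorem List.Pairwise.getElem_le_iff_lt_countP {α : Type*} [LinearOrder α] {l : List α}
    (hl : l.Pairwise (· ≤ ·)) {i : ℕ} (hi : i < l.length) (v : α) :
    l[i] ≤ v ↔ i < l.countP (· ≤ v) := by
  constructor
  · intro hv
    have htake : (l.take (i + 1)).countP (· ≤ v) = i + 1 := by
      rw [List.countP_eq_length.2, List.length_take, min_eq_left hi]
      intro a ha
      obtain ⟨j, hj, rfl⟩ := List.mem_take_iff_getElem.1 ha
      simpa using (hl.rel_get_of_le (a := ⟨j, by omega⟩) (b := ⟨i, hi⟩)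
        (by simp only [Fin.mk_le_mk]; omega)).trans hv
    have := (List.take_sublist (i + 1) l).countP_le (p := (· ≤ v))
    omega
  · intro hc
    by_contra! hv
    have hdrop : (l.drop i).countP (· ≤ v) = 0 := by
      refine List.countP_eq_zero.2 fun a ha => ?_
      obtain ⟨j, hj, rfl⟩ := List.mem_iff_getElem.1 ha
      rw [List.length_drop] at hj
      have : l[i] ≤ l[i + j] := hl.rel_get_of_le (a := ⟨i, hi⟩) (b := ⟨i + j, by omega⟩)
        (by simp only [Fin.mk_le_mk]; omega)
      simpa [List.getElem_drop] using hv.trans_le this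
    have := List.countP_le_length (p := (· ≤ v)) (l := l.take i)
    rw [List.length_take] at this
    rw [← List.take_append_drop i l, List.countP_append, hdrop] at hc
    omega

theorem Multiset.sort_map_getElem_le {α : Type*} {s : Multiset α} {f g : α → ℝ} {c : ℝ}
    (h : ∀ a ∈ s, f a ≤ g a + c) {i : ℕ} (hf : i < ((s.map f).sort (· ≤ ·)).length)
    (hg : i < ((s.map g).sort (· ≤ ·)).length) :
    ((s.map f).sort (· ≤ ·))[i] ≤ ((s.map g).sort (· ≤ ·))[i] + c := by
  set v := ((s.map g).sort (· ≤ ·))[i]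
  have countP_sort : ∀ (φ : α → ℝ) (w : ℝ),
      ((s.map φ).sort (· ≤ ·)).countP (· ≤ w) = (s.filter (φ · ≤ w)).card := by
    intro φ w
    rw [← Multiset.coe_countP, Multiset.sort_eq, Multiset.countP_map]
  have hcount := ((Multiset.pairwise_sort _ _).getElem_le_iff_lt_countP hg v).1 le_rfl
  refine ((Multiset.pairwise_sort _ _).getElem_le_iff_lt_countP hf _).2 ?_
  rw [countP_sort] at hcount ⊢
  have hfilter : s.filter (g · ≤ v) = s.filter (fun a => g a ≤ v ∧ f a ≤ v + c) :=
    Multiset.filter_congr fun a ha => ⟨fun hga => ⟨hga, by linarith [h a ha]⟩, And.left⟩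
  rw [hfilter] at hcount
  exact hcount.trans_le
    (Multiset.card_le_card (Multiset.monotone_filter_right s fun _ => And.right))

theorem List.sqrt_sum_map_add_sq_le (l : List ℝ) (c : ℝ) :
    √((l.map fun b => (b + c) ^ 2).sum) ≤ √((l.map (· ^ 2)).sum) + |c| * √l.length := by
  let v : EuclideanSpace ℝ (Fin l.length) := WithLp.toLp 2 fun i => l[i]
  let w : EuclideanSpace ℝ (Fin l.length) := WithLp.toLp 2 fun _ => c
  have norm_vw : ‖v + w‖ = √((l.map fun b => (b + c) ^ 2).sum) := by
    simp [v, w, EuclideanSpace.norm_eq, Fin.sum_univ_fun_getElem (f := fun b => (b + c) ^ 2)]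
  have norm_v : ‖v‖ = √((l.map (· ^ 2)).sum) := by
    simp [v, EuclideanSpace.norm_eq, Fin.sum_univ_fun_getElem (f := fun b => b ^ 2)]
  have norm_w : ‖w‖ = |c| * √l.length := by
    simp [w, EuclideanSpace.norm_eq, Real.sqrt_sq_eq_abs, mul_comm]
  rw [← norm_vw, ← norm_v, ← norm_w]
  exact norm_add_le v w

section Declutter

variable {α : Type*} (d : α → α → ℝ) (f : α → ℝ)

theorem declutterAux_append (Q l₁ l₂ : List α) :
    declutterAux d f Q (l₁ ++ l₂) = declutterAux d f (declutterAux d f Q l₁) l₂ := by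
  induction l₁ generalizing Q with
  | nil => rfl
  | cons p rest ih =>
    rw [List.cons_append, declutterAux, declutterAux]
    split_ifs <;> apply ih

variable {d f}

theorem mem_declutterAux_of_mem {a : α} {Q : List α} (l : List α) (ha : a ∈ Q) :
    a ∈ declutterAux d f Q l := by
  induction l generalizing Q with
  | nil => exact ha
  | cons p rest ih =>
    rw [declutterAux]
    split_ifs
    · exact ih (List.mem_append_left _ ha)
    · exact ih ha

theorem mem_or_mem_of_mem_declutterAux {a : α} {Q l : List α}
    (ha : a ∈ declutterAux d f Q l) : a ∈ Q ∨ a ∈ l := by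
  induction l generalizing Q with
  | nil => exact Or.inl ha
  | cons p rest ih =>
    rw [declutterAux] at ha
    split_ifs at ha
    · rcases ih ha with h | h
      · rcases List.mem_append.1 h with h | h
        · exact Or.inl h
        · exact Or.inr (List.mem_singleton.1 h ▸ List.mem_cons_self)
      · exact Or.inr (List.mem_cons_of_mem _ h)
    · exact (ih ha).imp_right (List.mem_cons_of_mem _)

theorem exists_mem_declutterAux_le {p : α} {Q l : List α} (hp : p ∈ l)
    (hpp : d p p ≤ 2 * f p) : ∃ q ∈ declutterAux d f Q l, d p q ≤ 2 * f p := by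
  induction l generalizing Q with
  | nil => simp at hp
  | cons p' rest ih =>
    rw [declutterAux]
    rcases List.mem_cons.1 hp with rfl | hp
    · split_ifs with hkeep
      · exact ⟨p, mem_declutterAux_of_mem _ (List.mem_append_right _ List.mem_cons_self), hpp⟩
      · push Not at hkeep
        obtain ⟨q, hq, hpq⟩ := hkeep
        exact ⟨q, mem_declutterAux_of_mem _ hq, hpq.le⟩
    · split_ifs <;> exact ih hp

theorem le_of_mem_declutterAux {a q : α} {Q l : List α} (ha : a ∈ Q)
    (hq : q ∈ declutterAux d f Q l) (hqQ : q ∉ Q) : 2 * f q ≤ d q a := by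
  induction l generalizing Q with
  | nil => exact absurd hq hqQ
  | cons p rest ih =>
    rw [declutterAux] at hq
    split_ifs at hq with hkeep
    · by_cases hqp : q = p
      · exact hqp ▸ hkeep a ha
      · exact ih (List.mem_append_left _ ha) hq (by simp [hqQ, hqp])
    · exact ih ha hq hqQ

theorem exists_cover_of_mem_declutter {L : List α} (hL : L.Pairwise (f · ≤ f ·)) {p q : α}
    (hp : p ∈ L) (hpp : d p p ≤ 2 * f p) (hq : q ∈ declutter d f L) (hpq : f p < f q) :
    ∃ q', d p q' ≤ 2 * f p ∧ 2 * f q ≤ d q q' := by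
  obtain ⟨l₁, l₂, rfl⟩ := List.append_of_mem hp
  rw [declutter, ← List.singleton_append, ← List.append_assoc, declutterAux_append] at hq
  obtain ⟨q', hq', hpq'⟩ := exists_mem_declutterAux_le (Q := []) (List.mem_append_right l₁
    (List.mem_singleton_self p)) hpp
  refine ⟨q', hpq', le_of_mem_declutterAux hq' hq fun hqQ => ?_⟩
  have hq_le : f q ≤ f p := by
    rcases mem_or_mem_of_mem_declutterAux hqQ with h | h
    · simp at h
    · rcases List.mem_append.1 h with h | h
      · exact (List.pairwise_append.1 hL).2.2 q h p List.mem_cons_self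
      · rw [List.mem_singleton.1 h]
  exact hpq.not_ge hq_le

end Declutter

theorem mem_sortedDists {P : Finset X} {x : X} {a : ℝ} :
    a ∈ sortedDists P x ↔ ∃ p ∈ P, dist x p = a := by
  simp [sortedDists]

theorem length_sortedDists (P : Finset X) (x : X) : (sortedDists P x).length = P.card := by
  simp [sortedDists]

theorem kdist_nonneg (P : Finset X) (k : ℕ) (x : X) : 0 ≤ kdist P k x :=
  Real.sqrt_nonneg _

theorem forall₂_take_sortedDists (P : Finset X) (k : ℕ) (x y : X) :
    List.Forall₂ (fun a b => 0 ≤ a ∧ a ≤ b + dist x y)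
      ((sortedDists P x).take k) ((sortedDists P y).take k) := by
  refine List.forall₂_iff_get.2 ⟨by simp [length_sortedDists], fun i h₁ h₂ => ?_⟩
  simp only [List.length_take, length_sortedDists, lt_min_iff] at h₁ h₂
  simp only [List.get_eq_getElem, List.getElem_take]
  refine ⟨?_, Multiset.sort_map_getElem_le (fun a _ => ?_) _ _⟩
  · obtain ⟨p, -, hp⟩ := mem_sortedDists.1 (List.getElem_mem (l := sortedDists P x) _)
    exact hp ▸ dist_nonneg
  · linarith [dist_triangle x y a]

theorem kdist_le_kdist_add_dist (P : Finset X) (k : ℕ) (x y : X) :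
    kdist P k x ≤ kdist P k y + dist x y := by
  set B := (sortedDists P y).take k
  have hsum : (((sortedDists P x).take k).map (· ^ 2)).sum ≤
      (B.map fun b => (b + dist x y) ^ 2).sum := by
    refine List.Forall₂.sum_le_sum ?_
    rw [List.forall₂_map_left_iff, List.forall₂_map_right_iff]
    exact (forall₂_take_sortedDists P k x y).imp fun _ _ h => pow_le_pow_left₀ h.1 h.2 2
  have hB : (B.length : ℝ) / k ≤ 1 := by
    apply div_le_one_of_le₀ _ (Nat.cast_nonneg k)
    exact_mod_cast List.length_take_le k _
  calc kdist P k x ≤ √(1 / k) * √((B.map fun b => (b + dist x y) ^ 2).sum) := by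
        rw [← Real.sqrt_mul (by positivity)]
        exact Real.sqrt_le_sqrt (mul_le_mul_of_nonneg_left hsum (by positivity))
    _ ≤ √(1 / k) * (√((B.map (· ^ 2)).sum) + dist x y * √B.length) := by
        gcongr
        simpa only [abs_of_nonneg dist_nonneg] using B.sqrt_sum_map_add_sq_le (dist x y)
    _ = kdist P k y + dist x y * √(B.length / k) := by
        rw [Real.sqrt_div' (B.length : ℝ) (Nat.cast_nonneg k), kdist,
          Real.sqrt_mul (by positivity), one_div, Real.sqrt_inv]
        ring
    _ ≤ kdist P k y + dist x y := by
        gcongr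
        exact mul_le_of_le_one_right dist_nonneg (Real.sqrt_le_one.2 hB)

theorem exists_mem_dist_le_kdist (P : Finset X) {k : ℕ} (hk : 1 ≤ k) (hkP : k ≤ P.card)
    (x : X) :
    ∃ p ∈ P, dist x p ≤ kdist P k x := by
  obtain ⟨p, hp, hmin⟩ := P.exists_min_image (dist x) (Finset.card_pos.1 (by omega))
  refine ⟨p, hp, ?_⟩
  set A := (sortedDists P x).take k
  have hA : A.length = k := by simp [A, length_sortedDists, hkP]
  have hsum : (k : ℝ) * dist x p ^ 2 ≤ (A.map (· ^ 2)).sum := by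
    have := (A.map (· ^ 2)).card_nsmul_le_sum (dist x p ^ 2) fun b hb => by
      obtain ⟨a, ha, rfl⟩ := List.mem_map.1 hb
      obtain ⟨q, hq, rfl⟩ := mem_sortedDists.1 (List.mem_of_mem_take ha)
      exact pow_le_pow_left₀ dist_nonneg (hmin q hq) 2
    simpa [hA] using this
  rw [kdist, ← Real.sqrt_sq dist_nonneg]
  refine Real.sqrt_le_sqrt ?_
  rw [one_div, inv_mul_eq_div, le_div_iff₀ (by positivity)]
  linarith

/-- Every point kept by Declutter lies within 7ε of the ground truth `K`. -/
theorem declutter_no_outliers (P : Finset X) (k : ℕ) (hk : 1 ≤ k)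
    (hkP : k ≤ P.card) (K : Set X) (hK : IsCompact K) (hKne : K.Nonempty)
    (ε : ℝ) (hsample : NoisySample P k K ε)
    (Q : List X) (hQ : IsDeclutterOutput (fun a b => dist a b) (kdist P k) P Q) :
    ∀ q ∈ Q, ∃ x ∈ K, dist q x ≤ 7 * ε := by
  obtain ⟨L, hperm, hsorted, rfl⟩ := hQ
  obtain ⟨hkdist_K, hinfDist⟩ := hsample
  intro q hq
  obtain ⟨x, hxK, hqx⟩ := hK.exists_infDist_eq_dist hKne q
  replace hqx : dist q x ≤ kdist P k q + ε := hqx ▸ hinfDist q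
  by_cases hq_near : kdist P k q ≤ 2 * ε
  · exact ⟨x, hxK, by linarith [kdist_nonneg P k x, hkdist_K x hxK]⟩
  obtain ⟨p, hpP, hxp⟩ := exists_mem_dist_le_kdist P hk hkP x
  replace hxp : dist x p ≤ ε := hxp.trans (hkdist_K x hxK)
  have hp : kdist P k p ≤ 2 * ε := by
    linarith [kdist_le_kdist_add_dist P k p x, dist_comm p x, hkdist_K x hxK]
  obtain ⟨q', hpq', hqq'⟩ := exists_cover_of_mem_declutter hsorted
    (hperm.mem_iff.2 (Finset.mem_toList.2 hpP)) (by simp [kdist_nonneg]) hq (by linarith)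
  exact ⟨x, hxK, by linarith [dist_triangle4 q x p q']⟩
end

section
/- Generalized Declutter guarantee under relaxed axioms: suppose d_X satisfies the relaxed triangle inequality d_X(x,y) ≤ c_X (d_X(x,w)+d_X(w,y)) with c_X ≥ 1 and c_X < 2, and the robust distance d_{P,k} satisfies d_X(x,P) ≤ d_{P,k}(x) and d_{P,k}(x) ≤ c_L (d_{P,k}(y) + d_X(x,y)) with c_L ≥ 1. If P is an ε_k-noisy sample of a compact set K (i.e., d_{P,k} ≤ ε_k on K and d_X(x,K) ≤ d_{P,k}(x)+ε_k for all x), then the output Q of Declutter(P,k) satisfies d_H(K,Q) ≤ m·ε_k, where m = max{ c_L + c_X c_L + 4 c_X c_L² + 1, (2 + c_X² + 4 c_X² c_L)/(2 − c_X) }. -/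
/-!
A point `p` of `P` near a point `x ∈ K` has `f p ≤ 2 cL ε`, and Declutter keeps some `r` with
`d p r ≤ 2 f p`, so every point of `K` is near the output. Conversely, let `q` be kept and
`x ∈ K` with `d q x ≤ f q + ε`. If `f q` exceeds `f p` for the sample point `p` near `x`, then
`p` was processed first, so the kept `r` near `p` was already there when `q` was kept, whence
`2 f q ≤ d q r`. The relaxed triangle inequality then bounds `(2 - cX) f q`, and `cX < 2`
turns this into a bound on `d q x`.
-/

open Metric

variable {X : Type*} [MetricSpace X]

section Declutter

variable {Z : Type*} (d : Z → Z → ℝ) (f : Z → ℝ)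

theorem mem_declutterAux_of_mem_s17 {q : Z} :
    ∀ {L Q₀ : List Z}, q ∈ Q₀ → q ∈ declutterAux d f Q₀ L
  | [], _, hq => by simpa [declutterAux] using hq
  | p :: rest, Q₀, hq => by
    rw [declutterAux]
    split
    · exact mem_declutterAux_of_mem_s17 (List.mem_append_left _ hq)
    · exact mem_declutterAux_of_mem_s17 hq

theorem mem_or_mem_of_mem_declutterAux_s17 {q : Z} :
    ∀ {L Q₀ : List Z}, q ∈ declutterAux d f Q₀ L → q ∈ Q₀ ∨ q ∈ L
  | [], _, hq => by simpa [declutterAux] using hq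
  | p :: rest, Q₀, hq => by
    rw [declutterAux] at hq
    split at hq
    · rcases mem_or_mem_of_mem_declutterAux_s17 hq with h | h
      · rcases List.mem_append.mp h with h | h
        · exact .inl h
        · exact .inr (List.mem_singleton.mp h ▸ List.mem_cons_self)
      · exact .inr (List.mem_cons_of_mem p h)
    · exact (mem_or_mem_of_mem_declutterAux_s17 hq).imp_right (List.mem_cons_of_mem p)

theorem mem_of_mem_declutter {L : List Z} {q : Z} (hq : q ∈ declutter d f L) : q ∈ L :=
  (mem_or_mem_of_mem_declutterAux_s17 d f hq).resolve_left List.not_mem_nil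

theorem declutterAux_append_s17 :
    ∀ (L₁ L₂ Q₀ : List Z),
      declutterAux d f Q₀ (L₁ ++ L₂) = declutterAux d f (declutterAux d f Q₀ L₁) L₂
  | [], _, _ => by simp [declutterAux]
  | p :: rest, L₂, Q₀ => by
    rw [List.cons_append, declutterAux, declutterAux]
    split <;> exact declutterAux_append_s17 _ _ _

theorem mem_declutterAux_or_exists_dist_lt {p : Z} :
    ∀ {L Q₀ : List Z}, p ∈ L →
      p ∈ declutterAux d f Q₀ L ∨ ∃ r ∈ declutterAux d f Q₀ L, d p r < 2 * f p
  | a :: rest, Q₀, hp => by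
    rw [declutterAux]
    split
    case isTrue =>
      rcases List.mem_cons.mp hp with rfl | hp
      · exact .inl (mem_declutterAux_of_mem_s17 d f List.mem_concat_self)
      · exact mem_declutterAux_or_exists_dist_lt hp
    case isFalse hblocked =>
      rcases List.mem_cons.mp hp with rfl | hp
      · push Not at hblocked
        obtain ⟨r, hr, hlt⟩ := hblocked
        exact .inr ⟨r, mem_declutterAux_of_mem_s17 d f hr, hlt⟩
      · exact mem_declutterAux_or_exists_dist_lt hp

theorem two_mul_le_dist_of_mem_declutterAux {q : Z} :
    ∀ {L Q₀ : List Z}, q ∈ declutterAux d f Q₀ L → q ∉ Q₀ → ∀ r ∈ Q₀, 2 * f q ≤ d q r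
  | [], _, hq, hnot => absurd (by simpa [declutterAux] using hq) hnot
  | a :: rest, Q₀, hq, hnot => by
    rw [declutterAux] at hq
    split at hq
    case isTrue hfree =>
      by_cases hqa : q = a
      · exact hqa ▸ hfree
      · intro r hr
        refine two_mul_le_dist_of_mem_declutterAux hq ?_ r (List.mem_append_left _ hr)
        simpa [hqa] using hnot
    case isFalse => exact two_mul_le_dist_of_mem_declutterAux hq hnot

theorem exists_mem_declutter_dist_le {L : List Z} {p : Z} (hp : p ∈ L)
    (hpp : d p p = 0) (hfp : 0 ≤ f p) : ∃ r ∈ declutter d f L, d p r ≤ 2 * f p := by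
  rcases mem_declutterAux_or_exists_dist_lt d f (Q₀ := []) hp with hkept | ⟨r, hr, hlt⟩
  · exact ⟨p, hkept, by linarith⟩
  · exact ⟨r, hr, hlt.le⟩

theorem exists_mem_declutter_far_near_of_lt {L : List Z}
    (hsorted : L.Pairwise (fun a b => f a ≤ f b)) (hnodup : L.Nodup)
    {p q : Z} (hp : p ∈ L) (hq : q ∈ declutter d f L) (hpq : f p < f q)
    (hpp : d p p = 0) (hfp : 0 ≤ f p) :
    ∃ r ∈ declutter d f L, 2 * f q ≤ d q r ∧ d p r ≤ 2 * f p := by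
  obtain ⟨L₁, L₂, rfl⟩ := List.append_of_mem (mem_of_mem_declutter d f hq)
  have hpL₁ : p ∈ L₁ := by
    rcases List.mem_append.mp hp with h | h
    · exact h
    · have hqp : f q ≤ f p := by
        rcases List.mem_cons.mp h with rfl | h
        · exact le_rfl
        · exact List.rel_of_pairwise_cons (List.pairwise_append.mp hsorted).2.1 h
      exact absurd hpq hqp.not_gt
  have hqL₁ : q ∉ L₁ := fun h =>
    List.disjoint_of_nodup_append hnodup h List.mem_cons_self
  have hsplit : declutter d f (L₁ ++ q :: L₂) = declutterAux d f (declutter d f L₁) (q :: L₂) :=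
    declutterAux_append_s17 d f _ _ _
  obtain ⟨r, hr, hpr⟩ := exists_mem_declutter_dist_le d f hpL₁ hpp hfp
  refine ⟨r, hsplit ▸ mem_declutterAux_of_mem_s17 d f hr, ?_, hpr⟩
  exact two_mul_le_dist_of_mem_declutterAux d f (hsplit ▸ hq)
    (fun h => hqL₁ (mem_of_mem_declutter d f h)) r hr

end Declutter

section RelaxedAxioms

variable {Y : Type*} {d : Y → Y → ℝ} {f : Y → ℝ} {cX cL ε : ℝ}

theorem le_two_mul_of_dist_le (hcL : 0 ≤ cL) (hB : ∀ x y : Y, f x ≤ cL * (f y + d x y))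
    {x p : Y} (hpx : d p x ≤ f x) (hx : f x ≤ ε) : f p ≤ 2 * cL * ε :=
  calc f p ≤ cL * (f x + d p x) := hB p x
    _ ≤ cL * (ε + ε) := by gcongr; linarith
    _ = 2 * cL * ε := by ring

theorem exists_mem_declutter_dist_le_of_le
    (hsymm : ∀ x y, d x y = d y x) (hself : ∀ x, d x x = 0) (hf : ∀ x, 0 ≤ f x)
    (hcX : 0 ≤ cX) (htri : ∀ x y w, d x y ≤ cX * (d x w + d w y))
    (hcL : 0 ≤ cL) (hB : ∀ x y : Y, f x ≤ cL * (f y + d x y))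
    {L : List Y} {x : Y} (hA : ∃ p ∈ L, d x p ≤ f x) (hx : f x ≤ ε) :
    ∃ r ∈ declutter d f L, d x r ≤ (cX + 4 * cX * cL) * ε := by
  obtain ⟨p, hpL, hxp⟩ := hA
  have hfp := le_two_mul_of_dist_le hcL hB (hsymm p x ▸ hxp) hx
  obtain ⟨r, hr, hpr⟩ := exists_mem_declutter_dist_le d f hpL (hself p) (hf p)
  refine ⟨r, hr, ?_⟩
  calc d x r ≤ cX * (d x p + d p r) := htri x r p
    _ ≤ cX * (ε + 4 * cL * ε) := by gcongr <;> linarith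
    _ = (cX + 4 * cX * cL) * ε := by ring

theorem dist_le_of_mem_declutter
    (hsymm : ∀ x y, d x y = d y x) (hself : ∀ x, d x x = 0) (hf : ∀ x, 0 ≤ f x)
    (hcX : 0 ≤ cX) (hcX2 : cX < 2) (htri : ∀ x y w, d x y ≤ cX * (d x w + d w y))
    (hcL : 0 ≤ cL) (hB : ∀ x y : Y, f x ≤ cL * (f y + d x y))
    {L : List Y} (hsorted : L.Pairwise (fun a b => f a ≤ f b)) (hnodup : L.Nodup)
    {q x : Y} (hq : q ∈ declutter d f L) (hA : ∃ p ∈ L, d x p ≤ f x) (hx : f x ≤ ε)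
    (hqx : d q x ≤ f q + ε) :
    d q x ≤ max (2 * cL + 1) ((2 + cX ^ 2 + 4 * cX ^ 2 * cL) / (2 - cX)) * ε := by
  have hε : 0 ≤ ε := (hf x).trans hx
  obtain ⟨p, hpL, hxp⟩ := hA
  have hfp := le_two_mul_of_dist_le hcL hB (hsymm p x ▸ hxp) hx
  rcases le_or_gt (f q) (f p) with hqp | hpq
  · calc d q x ≤ (2 * cL + 1) * ε := by linarith
      _ ≤ _ := by gcongr; exact le_max_left _ _
  obtain ⟨r, hr, hfar, hpr⟩ :=
    exists_mem_declutter_far_near_of_lt d f hsorted hnodup hpL hq hpq (hself p) (hf p)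
  have hxr : d x r ≤ cX * (ε + 4 * cL * ε) :=
    (htri x r p).trans (by gcongr <;> linarith)
  -- `2 f q ≤ d q r ≤ cX (d q x + d x r)` with `f q ≥ d q x - ε`
  have hkey : (2 - cX) * d q x ≤ (2 + cX ^ 2 + 4 * cX ^ 2 * cL) * ε := by
    nlinarith [htri q r x, mul_le_mul_of_nonneg_left hxr hcX]
  calc d q x ≤ (2 + cX ^ 2 + 4 * cX ^ 2 * cL) / (2 - cX) * ε := by
        rw [div_mul_eq_mul_div, le_div_iff₀ (by linarith)]
        linarith
    _ ≤ _ := by gcongr; exact le_max_right _ _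

end RelaxedAxioms

theorem declutter_relaxed_general {Y : Type*} (d : Y → Y → ℝ)
    (hsymm : ∀ x y, d x y = d y x) (hnonneg : ∀ x y, 0 ≤ d x y)
    (hself : ∀ x, d x x = 0)
    (cX : ℝ) (hcX1 : 1 ≤ cX) (hcX2 : cX < 2)
    (htri : ∀ x y w, d x y ≤ cX * (d x w + d w y))
    (P : Finset Y)
    (f : Y → ℝ)
    (hA : ∀ x : Y, ∃ p ∈ P, d x p ≤ f x)
    (cL : ℝ) (hcL : 1 ≤ cL)
    (hB : ∀ x y : Y, f x ≤ cL * (f y + d x y))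
    (K : Set Y)
    (ε : ℝ)
    -- P is an ε_k-noisy sample of K w.r.t. the robust distance f:
    (hs1 : ∀ x ∈ K, f x ≤ ε)
    (hs2 : ∀ x : Y, ∃ z ∈ K, d x z ≤ f x + ε)
    (Q : List Y) (hQ : IsDeclutterOutput d f P Q)
    (m : ℝ)
    (hm : m = max (cL + cX * cL + 4 * cX * cL ^ 2 + 1)
      ((2 + cX ^ 2 + 4 * cX ^ 2 * cL) / (2 - cX))) :
    (∀ x ∈ K, ∃ q ∈ Q, d x q ≤ m * ε) ∧ ∀ q ∈ Q, ∃ x ∈ K, d q x ≤ m * ε := by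
  obtain ⟨L, hperm, hsorted, rfl⟩ := hQ
  have hAL : ∀ x, ∃ p ∈ L, d x p ≤ f x := fun x =>
    let ⟨p, hp, hxp⟩ := hA x; ⟨p, hperm.mem_iff.mpr (Finset.mem_toList.mpr hp), hxp⟩
  have hf : ∀ x, 0 ≤ f x := fun x =>
    let ⟨p, _, hxp⟩ := hA x; (hnonneg x p).trans hxp
  have hcX0 : 0 ≤ cX := by linarith
  have hcL0 : 0 ≤ cL := by linarith
  have hcover : cX + 4 * cX * cL ≤ m := hm ▸ le_max_of_le_left (by
    nlinarith [mul_nonneg hcX0 (sub_nonneg.2 hcL),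
      mul_nonneg (mul_nonneg hcX0 hcL0) (sub_nonneg.2 hcL)])
  have hsep : max (2 * cL + 1) ((2 + cX ^ 2 + 4 * cX ^ 2 * cL) / (2 - cX)) ≤ m :=
    hm ▸ max_le_max (by
      nlinarith [mul_nonneg (sub_nonneg.2 hcX1) hcL0, mul_nonneg hcX0 (sq_nonneg cL)]) le_rfl
  refine ⟨fun x hx => ?_, fun q hq => ?_⟩
  · obtain ⟨r, hr, hxr⟩ := exists_mem_declutter_dist_le_of_le hsymm hself hf hcX0 htri hcL0 hB
      (hAL x) (hs1 x hx)
    exact ⟨r, hr, hxr.trans (by gcongr; linarith [hf x, hs1 x hx])⟩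
  · obtain ⟨x, hxK, hqx⟩ := hs2 q
    have hbound := dist_le_of_mem_declutter hsymm hself hf hcX0 hcX2 htri hcL0 hB hsorted
      (hperm.nodup_iff.mpr P.nodup_toList) hq (hAL x) (hs1 x hxK) hqx
    exact ⟨x, hxK, hbound.trans (by gcongr; linarith [hf x, hs1 x hxK])⟩

/-- Generalized Declutter guarantee under relaxed axioms: a quasi-metric `d` with
relaxed triangle inequality (constant `cX ∈ [1,2)`), and a robust distance `f = d_{P,k}`
satisfying (A) `d(x,P) ≤ f x` and the relaxed Lipschitz condition (B')
`f x ≤ cL (f y + d x y)`.  The output of Declutter on an ε_k-noisy sample is within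
(generalized) Hausdorff distance `m ε` of `K`. -/
theorem declutter_relaxed {Y : Type*} (d : Y → Y → ℝ)
    (hsymm : ∀ x y, d x y = d y x) (hnonneg : ∀ x y, 0 ≤ d x y)
    (hself : ∀ x, d x x = 0)
    (cX : ℝ) (hcX1 : 1 ≤ cX) (hcX2 : cX < 2)
    (htri : ∀ x y w, d x y ≤ cX * (d x w + d w y))
    (P : Finset Y) (hP : P.Nonempty)
    (f : Y → ℝ)
    (hA : ∀ x : Y, ∃ p ∈ P, d x p ≤ f x)
    (cL : ℝ) (hcL : 1 ≤ cL)
    (hB : ∀ x y : Y, f x ≤ cL * (f y + d x y))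
    (K : Set Y) (hKne : K.Nonempty)
    (ε : ℝ)
    -- P is an ε_k-noisy sample of K w.r.t. the robust distance f:
    (hs1 : ∀ x ∈ K, f x ≤ ε)
    (hs2 : ∀ x : Y, ∃ z ∈ K, d x z ≤ f x + ε)
    (Q : List Y) (hQ : IsDeclutterOutput d f P Q)
    (m : ℝ)
    (hm : m = max (cL + cX * cL + 4 * cX * cL ^ 2 + 1)
      ((2 + cX ^ 2 + 4 * cX ^ 2 * cL) / (2 - cX))) :
    (∀ x ∈ K, ∃ q ∈ Q, d x q ≤ m * ε) ∧ ∀ q ∈ Q, ∃ x ∈ K, d q x ≤ m * ε :=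
  declutter_relaxed_general d hsymm hnonneg hself cX hcX1 hcX2 htri P f hA cL hcL hB K ε hs1 hs2 Q
    hQ m hm
end
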